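/- Let (c_j)_{j ∈ ℤ} be an absolutely summable sequence of real numbers with c_j = c_{-j} for all j, and let 0 ≤ a < b ≤ 1. Then (1/n) · Σ_{i=⌊an⌋+1}^{⌊bn⌋} Σ_{j=⌊an⌋+1}^{⌊bn⌋} (i/n)(j/n) · c_{j-i} converges, as n → ∞, to ((b³ - a³)/3) · Σ_{j ∈ ℤ} c_j. -/

import Mathlib

/-!
Grouping the double sum by the lag `k = j - i` writes it as `∑' k, w n k * c k`, where
`w n k = n⁻³ ∑ i (i + k)` over the `i` for which both `i` and `i + k` lie in the window
`⌊a n⌋ < i ≤ ⌊b n⌋`. These weights lie in `[0, 1]`, and for fixed `k` the admissible `i` form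
an integer interval with ends `≈ a n` and `≈ b n`, so summing `i (i + k)` in closed form gives
`w n k → (b³ - a³) / 3`. Dominated convergence with the summable bound `|c k|` concludes.
-/

open Filter Finset Topology

theorem sum_Ioc_sub_sub_one {M : Type*} [AddCommGroup M] (f : ℤ → M) {s t : ℤ} (hst : s ≤ t) :
    ∑ i ∈ Ioc s t, (f i - f (i - 1)) = f t - f s := by
  induction t, hst using Int.leInduction with
  | base => simp
  | succ t hst ih =>
    rw [← insert_Ioc_right_eq_Ioc_add_one hst, sum_insert (by simp), ih, add_sub_cancel_right]
    abel

/-- A discrete antiderivative of `i ↦ i * (i + k)`. -/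
noncomputable def mulAddPrimitive (k : ℤ) (x : ℝ) : ℝ :=
  x * (x + 1) * (2 * x + 1) / 6 + k * x * (x + 1) / 2

theorem sum_Ioc_mul_add (k : ℤ) {s t : ℤ} (hst : s ≤ t) :
    ∑ i ∈ Ioc s t, (i : ℝ) * (i + k) = mulAddPrimitive k t - mulAddPrimitive k s := by
  rw [← sum_Ioc_sub_sub_one (fun i : ℤ => mulAddPrimitive k i) hst]
  refine sum_congr rfl fun i _ => ?_
  simp only [mulAddPrimitive]
  push_cast
  ring

theorem tendsto_mulAddPrimitive_div {a : ℝ} (k : ℤ) {s : ℕ → ℤ}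
    (hs : Tendsto (fun n : ℕ => (s n : ℝ) / n) atTop (𝓝 a)) :
    Tendsto (fun n : ℕ => mulAddPrimitive k (s n) / n ^ 3) atTop (𝓝 (a ^ 3 / 3)) := by
  -- `mulAddPrimitive k x / n ^ 3 = Q (x / n, 1 / n)`
  set Q : ℝ × ℝ → ℝ := fun p =>
    p.1 * (p.1 + p.2) * (2 * p.1 + p.2) / 6 + k * p.1 * (p.1 + p.2) * p.2 / 2
  have hQ : Tendsto (fun n : ℕ => Q ((s n : ℝ) / n, 1 / n)) atTop (𝓝 (Q (a, 0))) :=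
    ((by fun_prop : Continuous Q).tendsto _).comp
      (hs.prodMk_nhds tendsto_one_div_atTop_nhds_zero_nat)
  convert hQ.congr' ?_ using 2
  · simp only [Q]
    ring
  · filter_upwards [eventually_gt_atTop 0] with n hn
    have hn : (n : ℝ) ≠ 0 := by positivity
    simp only [Q, mulAddPrimitive]
    field_simp

theorem tendsto_sum_Ioc_mul_add_div {a b : ℝ} (hab : a < b) (k : ℤ) {s t : ℕ → ℤ}
    (hs : Tendsto (fun n : ℕ => (s n : ℝ) / n) atTop (𝓝 a))
    (ht : Tendsto (fun n : ℕ => (t n : ℝ) / n) atTop (𝓝 b)) :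
    Tendsto (fun n : ℕ => (∑ i ∈ Ioc (s n) (t n), (i : ℝ) * (i + k)) / n ^ 3) atTop
      (𝓝 ((b ^ 3 - a ^ 3) / 3)) := by
  have hst : ∀ᶠ n : ℕ in atTop, s n ≤ t n := by
    filter_upwards [(ht.sub hs).eventually (eventually_gt_nhds (sub_pos.2 hab))] with n hn
    by_contra! h
    have : ((t n : ℝ) - s n) / n ≤ 0 :=
      div_nonpos_of_nonpos_of_nonneg (by exact_mod_cast (sub_neg.2 h).le) n.cast_nonneg
    linarith [div_sub_div_same (t n : ℝ) (s n) n]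
  rw [show (b ^ 3 - a ^ 3) / 3 = b ^ 3 / 3 - a ^ 3 / 3 by ring]
  refine ((tendsto_mulAddPrimitive_div k ht).sub (tendsto_mulAddPrimitive_div k hs)).congr' ?_
  filter_upwards [hst] with n hn
  rw [sum_Ioc_mul_add k hn, sub_div]

theorem tendsto_floor_mul_add_div (x : ℝ) (d : ℤ) :
    Tendsto (fun n : ℕ => ((⌊x * n⌋ + d : ℤ) : ℝ) / n) atTop (𝓝 x) := by
  have hlim (e : ℝ) : Tendsto (fun n : ℕ => x + e / n) atTop (𝓝 x) := by
    simpa using tendsto_const_nhds.add (tendsto_const_div_atTop_nhds_zero_nat e)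
  refine tendsto_of_tendsto_of_tendsto_of_le_of_le' (hlim (d - 1)) (hlim d) ?_ ?_ <;>
    filter_upwards [eventually_gt_atTop 0] with n hn <;>
    have hn : (0 : ℝ) < n := Nat.cast_pos.mpr hn
  · rw [add_div' _ _ _ hn.ne', div_le_div_iff_of_pos_right hn]
    push_cast
    linarith [Int.sub_one_lt_floor (x * n)]
  · rw [add_div' _ _ _ hn.ne', div_le_div_iff_of_pos_right hn]
    push_cast
    linarith [Int.floor_le (x * n)]

theorem sum_sum_mul_sub_eq_tsum (I : Finset ℤ) (g : ℤ → ℤ → ℝ) (c : ℤ → ℝ) :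
    ∑ i ∈ I, ∑ j ∈ I, g i j * c (j - i) = ∑' k, (∑ i ∈ I with i + k ∈ I, g i (i + k)) * c k := by
  have hrow (i : ℤ) : HasSum (fun k => if i + k ∈ I then g i (i + k) * c k else 0)
      (∑ j ∈ I, g i j * c (j - i)) := by
    have h : HasSum (fun j => if j ∈ I then g i j * c (j - i) else 0)
        (∑ j ∈ I, g i j * c (j - i)) := by
      simpa [sum_ite_mem] using hasSum_sum_of_ne_finset_zero (s := I)
        (f := fun j => if j ∈ I then g i j * c (j - i) else 0) fun j hj => if_neg hj
    simpa [Function.comp_def] using (Equiv.addLeft i).hasSum_iff.mpr h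
  rw [(hasSum_sum fun i _ => hrow i).tsum_eq.symm]
  simp_rw [sum_filter, sum_mul, ite_mul, zero_mul]

noncomputable def lagWeight (I : Finset ℤ) (n : ℕ) (k : ℤ) : ℝ :=
  1 / n * ∑ i ∈ I with i + k ∈ I, ((i : ℝ) / n) * (((i + k : ℤ) : ℝ) / n)

theorem sum_sum_mul_sub_eq_tsum_lagWeight (I : Finset ℤ) (n : ℕ) (c : ℤ → ℝ) :
    1 / n * ∑ i ∈ I, ∑ j ∈ I, ((i : ℝ) / n) * ((j : ℝ) / n) * c (j - i)
      = ∑' k, lagWeight I n k * c k := by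
  simp_rw [sum_sum_mul_sub_eq_tsum, lagWeight, ← tsum_mul_left, mul_assoc]

theorem abs_lagWeight_le_one {I : Finset ℤ} {n : ℕ} (hI : I ⊆ Icc 1 n) (k : ℤ) :
    |lagWeight I n k| ≤ 1 := by
  rcases n.eq_zero_or_pos with rfl | hn
  · simp [lagWeight]
  have hn : (0 : ℝ) < n := Nat.cast_pos.mpr hn
  have hunit : ∀ j ∈ I, 0 ≤ (j : ℝ) / n ∧ (j : ℝ) / n ≤ 1 := fun j hj => by
    obtain ⟨h1, hjn⟩ := mem_Icc.1 (hI hj)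
    exact ⟨by positivity, div_le_one_of_le₀ (by exact_mod_cast hjn) hn.le⟩
  have hterm : ∀ i ∈ {i ∈ I | i + k ∈ I}, 0 ≤ ((i : ℝ) / n) * (((i + k : ℤ) : ℝ) / n) ∧
      ((i : ℝ) / n) * (((i + k : ℤ) : ℝ) / n) ≤ 1 := fun i hi => by
    obtain ⟨hi, hik⟩ := mem_filter.1 hi
    obtain ⟨h1, h2⟩ := hunit i hi
    obtain ⟨h3, h4⟩ := hunit _ hik
    exact ⟨mul_nonneg h1 h3, mul_le_one₀ h2 h3 h4⟩
  have hcard : (#{i ∈ I | i + k ∈ I} : ℝ) ≤ n := by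
    exact_mod_cast (card_filter_le _ _).trans ((card_le_card hI).trans (by simp))
  rw [lagWeight, abs_of_nonneg (mul_nonneg (by positivity) (sum_nonneg fun i hi => (hterm i hi).1))]
  calc 1 / n * ∑ i ∈ I with i + k ∈ I, ((i : ℝ) / n) * (((i + k : ℤ) : ℝ) / n)
      ≤ 1 / n * (#{i ∈ I | i + k ∈ I} • 1) := by
        gcongr
        exact sum_le_card_nsmul _ _ _ fun i hi => (hterm i hi).2
    _ ≤ 1 / n * n := by gcongr; simpa using hcard
    _ = 1 := one_div_mul_cancel hn.ne'

theorem tendsto_lagWeight_Icc_floor {a b : ℝ} (hab : a < b) (k : ℤ) :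
    Tendsto (fun n : ℕ => lagWeight (Icc (⌊a * n⌋ + 1) ⌊b * n⌋) n k) atTop
      (𝓝 ((b ^ 3 - a ^ 3) / 3)) := by
  refine (tendsto_sum_Ioc_mul_add_div hab k (tendsto_floor_mul_add_div a (-min k 0))
    (tendsto_floor_mul_add_div b (-max k 0))).congr fun n => ?_
  have hlags : {i ∈ Icc (⌊a * n⌋ + 1) ⌊b * n⌋ | i + k ∈ Icc (⌊a * n⌋ + 1) ⌊b * n⌋}
      = Ioc (⌊a * n⌋ + -min k 0) (⌊b * n⌋ + -max k 0) := by
    ext i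
    simp only [mem_filter, mem_Icc, mem_Ioc]
    omega
  rw [lagWeight, hlags, sum_div, mul_sum]
  exact sum_congr rfl fun i _ => by push_cast; ring

theorem stmt_2_general (c : ℤ → ℝ) (hsum : Summable (fun j => |c j|))
    (a b : ℝ) (ha : 0 ≤ a) (hab : a < b) (hb : b ≤ 1) :
    Filter.Tendsto (fun n : ℕ =>
      (1 / (n : ℝ)) * ∑ i ∈ Finset.Icc (⌊a * (n : ℝ)⌋ + 1) ⌊b * (n : ℝ)⌋,
        ∑ j ∈ Finset.Icc (⌊a * (n : ℝ)⌋ + 1) ⌊b * (n : ℝ)⌋,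
          ((i : ℝ) / (n : ℝ)) * ((j : ℝ) / (n : ℝ)) * c (j - i))
      Filter.atTop (nhds (((b ^ 3 - a ^ 3) / 3) * ∑' j, c j)) := by
  have hwindow (n : ℕ) : Icc (⌊a * n⌋ + 1) ⌊b * n⌋ ⊆ Icc 1 (n : ℤ) :=
    Icc_subset_Icc (by simpa using Int.floor_nonneg.2 (by positivity))
      ((Int.floor_le_floor (mul_le_of_le_one_left n.cast_nonneg hb)).trans
        (Int.floor_natCast n).le)
  simp_rw [sum_sum_mul_sub_eq_tsum_lagWeight, ← tsum_mul_left]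
  refine tendsto_tsum_of_dominated_convergence hsum
    (fun k => (tendsto_lagWeight_Icc_floor hab k).mul_const (c k))
    (Eventually.of_forall fun n k => ?_)
  rw [norm_mul, Real.norm_eq_abs]
  exact mul_le_of_le_one_left (abs_nonneg _) (abs_lagWeight_le_one (hwindow n) k)

theorem stmt_2 (c : ℤ → ℝ) (hsum : Summable (fun j => |c j|))
    (hsym : ∀ j, c j = c (-j)) (a b : ℝ) (ha : 0 ≤ a) (hab : a < b) (hb : b ≤ 1) :
    Filter.Tendsto (fun n : ℕ =>
      (1 / (n : ℝ)) * ∑ i ∈ Finset.Icc (⌊a * (n : ℝ)⌋ + 1) ⌊b * (n : ℝ)⌋,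
        ∑ j ∈ Finset.Icc (⌊a * (n : ℝ)⌋ + 1) ⌊b * (n : ℝ)⌋,
          ((i : ℝ) / (n : ℝ)) * ((j : ℝ) / (n : ℝ)) * c (j - i))
      Filter.atTop (nhds (((b ^ 3 - a ^ 3) / 3) * ∑' j, c j)) :=
  stmt_2_general c hsum a b ha hab hb
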